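/- Let τ ∈ {1,−1} and λ, e₁, e₂, π ∈ ℝ, and let ρ be the infimum of g(z₁,z₂) = τλz₁z₂ + ½τz₂² + e₁z₁ + e₂z₂ over all (z₁,z₂) ∈ ℝ² with τz₁z₂ = π. Then: (1) if τ = 1, e₁ = 0 and (e₂ ≠ 0 or π = 0), then ρ = λπ − ½e₂² and the infimum is attained; (2) if τ = 1, e₁ = 0, e₂ = 0 and π ≠ 0, then ρ = λπ but the infimum is not attained (g(z₁,z₂) > λπ for every feasible point, while feasible values come arbitrarily close to λπ); (3) if τ = −1 or e₁ ≠ 0, then g is unbounded from below on the constraint set. -/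
import Mathlib


/-- Theorem 3.1 of Jiang–Li–Wu (equality-constrained block analysis):
for `g(z₁,z₂) = τλ z₁ z₂ + ½τ z₂² + e₁ z₁ + e₂ z₂` over the set `{τ z₁ z₂ = π}`:
(1) if `τ = 1`, `e₁ = 0` and (`e₂ ≠ 0` or `π = 0`), the infimum is `λπ − ½e₂²` and attained;
(2) if `τ = 1`, `e₁ = 0`, `e₂ = 0` and `π ≠ 0`, the infimum is `λπ` but not attained;
(3) if `τ = −1` or `e₁ ≠ 0`, then `g` is unbounded from below on the constraint set. -/
theorem stmt_13 (τ lam e₁ e₂ p : ℝ) (hτ : τ = 1 ∨ τ = -1) :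
    ((τ = 1 ∧ e₁ = 0 ∧ (e₂ ≠ 0 ∨ p = 0)) →
      (∀ z₁ z₂ : ℝ, τ * (z₁ * z₂) = p →
        lam * p - (1/2) * e₂ ^ 2 ≤
          τ * lam * (z₁ * z₂) + (1/2) * τ * z₂ ^ 2 + e₁ * z₁ + e₂ * z₂) ∧
      (∃ z₁ z₂ : ℝ, τ * (z₁ * z₂) = p ∧
        τ * lam * (z₁ * z₂) + (1/2) * τ * z₂ ^ 2 + e₁ * z₁ + e₂ * z₂ =
          lam * p - (1/2) * e₂ ^ 2)) ∧
    ((τ = 1 ∧ e₁ = 0 ∧ e₂ = 0 ∧ p ≠ 0) →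
      (∀ z₁ z₂ : ℝ, τ * (z₁ * z₂) = p →
        lam * p < τ * lam * (z₁ * z₂) + (1/2) * τ * z₂ ^ 2 + e₁ * z₁ + e₂ * z₂) ∧
      (∀ ε : ℝ, 0 < ε → ∃ z₁ z₂ : ℝ, τ * (z₁ * z₂) = p ∧
        τ * lam * (z₁ * z₂) + (1/2) * τ * z₂ ^ 2 + e₁ * z₁ + e₂ * z₂ < lam * p + ε)) ∧
    ((τ = -1 ∨ e₁ ≠ 0) →
      ∀ M : ℝ, ∃ z₁ z₂ : ℝ, τ * (z₁ * z₂) = p ∧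
        τ * lam * (z₁ * z₂) + (1/2) * τ * z₂ ^ 2 + e₁ * z₁ + e₂ * z₂ < M) := by
  refine ⟨?_, ?_, ?_⟩
  · rintro ⟨rfl, rfl, h3⟩
    constructor
    · intro z₁ z₂ hz
      have hzz : z₁ * z₂ = p := by linarith
      rw [hzz]
      nlinarith [sq_nonneg (z₂ + e₂)]
    · rcases h3 with he | rfl
      · refine ⟨-p / e₂, -e₂, by field_simp, by field_simp; ring⟩
      · exact ⟨0, -e₂, by ring, by ring⟩
  · rintro ⟨rfl, rfl, rfl, hp⟩
    constructor
    · intro z₁ z₂ hz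
      have hzz : z₁ * z₂ = p := by linarith
      have hz₂ : z₂ ≠ 0 := by
        rintro rfl
        exact hp (by simpa using hzz.symm)
      have h2 : 0 < z₂ ^ 2 :=
        lt_of_le_of_ne (sq_nonneg z₂) (Ne.symm (pow_ne_zero 2 hz₂))
      rw [hzz]
      linarith
    · intro ε hε
      have hs : 0 < Real.sqrt ε := Real.sqrt_pos.mpr hε
      refine ⟨p / Real.sqrt ε, Real.sqrt ε, by field_simp, ?_⟩
      have hsq : Real.sqrt ε ^ 2 = ε := Real.sq_sqrt hε.le
      have hc : p / Real.sqrt ε * Real.sqrt ε = p := by field_simp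
      rw [hc, hsq]
      linarith
  · intro h M
    by_cases he : e₁ = 0
    · -- then τ = -1
      have hτm : τ = -1 := by
        rcases h with h | h
        · exact h
        · exact absurd he h
      subst hτm; subst he
      set t : ℝ := max (2 * |e₂| + 2) (lam * p - M + 1) with hts
      have ht1 : 2 * |e₂| + 2 ≤ t := le_max_left _ _
      have ht2 : lam * p - M + 1 ≤ t := le_max_right _ _
      have ht0 : 0 < t := by
        have := abs_nonneg e₂; linarith
      refine ⟨-p / t, t, by field_simp, ?_⟩
      have hc : -p / t * t = -p := by field_simp
      have hab : e₂ ≤ |e₂| := le_abs_self e₂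
      have h0 : 0 ≤ |e₂| := abs_nonneg e₂
      rw [hc]
      nlinarith [mul_le_mul_of_nonneg_right ht1 ht0.le,
        mul_le_mul_of_nonneg_right hab ht0.le]
    · -- e₁ ≠ 0
      have hτ2 : τ * τ = 1 := by rcases hτ with rfl | rfl <;> norm_num
      have hτle : τ ≤ 1 := by rcases hτ with rfl | rfl <;> norm_num
      set A : ℝ := lam * p + (1/2) * (p * e₁) ^ 2 + |e₂ * (p * e₁)| with hA
      set t : ℝ := max 1 (A - M + 1) with hts
      have ht1 : (1 : ℝ) ≤ t := le_max_left _ _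
      have htA : A - M + 1 ≤ t := le_max_right _ _
      have ht0 : (0 : ℝ) < t := lt_of_lt_of_le one_pos ht1
      set z₁ : ℝ := -t / e₁ with hz₁
      set z₂ : ℝ := -(τ * p * e₁) / t with hz₂
      have hz1 : e₁ * z₁ = -t := by rw [hz₁]; field_simp
      have hz2t : z₂ * t = -(τ * p * e₁) := by rw [hz₂]; field_simp
      have hprod : z₁ * z₂ = τ * p := by
        rw [hz₁, hz₂]; field_simp
      have hcon : τ * (z₁ * z₂) = p := by
        rw [hprod]; linear_combination p * hτ2
      refine ⟨z₁, z₂, hcon, ?_⟩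
      have hsq : z₂ ^ 2 * t ^ 2 = (p * e₁) ^ 2 := by
        have h' : (z₂ * t) ^ 2 = (τ * p * e₁) ^ 2 := by rw [hz2t]; ring
        calc z₂ ^ 2 * t ^ 2 = (z₂ * t) ^ 2 := by ring
          _ = (τ * p * e₁) ^ 2 := h'
          _ = (p * e₁) ^ 2 := by linear_combination (p * e₁) ^ 2 * hτ2
      have ht2 : 1 ≤ t ^ 2 := by nlinarith
      have hb : z₂ ^ 2 ≤ (p * e₁) ^ 2 := by
        nlinarith [sq_nonneg z₂]
      have key : e₂ * z₂ ≤ |e₂ * (p * e₁)| := by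
        have hx : e₂ * z₂ * t = -(e₂ * (τ * p * e₁)) := by
          rw [mul_assoc, hz2t]; ring
        have habs : |e₂ * (τ * p * e₁)| = |e₂ * (p * e₁)| := by
          rcases hτ with rfl | rfl
          · ring_nf
          · rw [show e₂ * (-1 * p * e₁) = -(e₂ * (p * e₁)) by ring, abs_neg]
        rcases le_or_gt (e₂ * z₂) 0 with h'| h'
        · exact h'.trans (abs_nonneg _)
        · have h1 : -(e₂ * (τ * p * e₁)) ≤ |e₂ * (p * e₁)| := by
            rw [← habs]; exact neg_le_abs _
          nlinarith
      have hq : (1/2) * τ * z₂ ^ 2 ≤ (1/2) * (p * e₁) ^ 2 := by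
        nlinarith [sq_nonneg z₂]
      have hl : τ * lam * (z₁ * z₂) = lam * p := by
        rw [hprod]; linear_combination lam * p * hτ2
      rw [hl, hz1]
      have hfin : A - t ≤ M - 1 := by linarith
      clear_value A t z₁ z₂
      linarith
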